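/- For every n ≥ 3, the full subdivision SK_n of the complete graph K_n, embedded in the hypercube Q_n by sending each original vertex u_i to the singleton {i} and each subdivision vertex u_{i,j} to the pair {i,j}, is an isometric subgraph of Q_n of VC-dimension exactly 2. -/

import Mathlib

open Finset

/-- The hypercube graph on subsets of `Fin m`. -/
def cubeGraph (m : ℕ) : SimpleGraph (Finset (Fin m)) where
  Adj A B := (symmDiff A B).card = 1
  symm := ⟨fun A B h => by show (symmDiff B A).card = 1; rwa [symmDiff_comm]⟩
  loopless := ⟨fun A h => by simp only [symmDiff_self, bot_eq_empty, card_empty] at h; exact absurd h (by norm_num)⟩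

/-- `V` is (the vertex set of) a partial cube isometrically embedded in `Q_m`:
the distance in the induced subgraph equals the Hamming distance. -/
def IsPC {m : ℕ} (V : Set (Finset (Fin m))) : Prop :=
  ∀ u v : V, ((cubeGraph m).induce V).dist u v = (symmDiff u.1 v.1).card

def Shatters {m : ℕ} (V : Set (Finset (Fin m))) (Y : Finset (Fin m)) : Prop :=
  ∀ Z ⊆ Y, ∃ B ∈ V, B ∩ Y = Z

def VCdimLE {m : ℕ} (V : Set (Finset (Fin m))) (d : ℕ) : Prop :=
  ∀ Y : Finset (Fin m), Shatters V Y → Y.card ≤ d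

inductive PCStep {m : ℕ} : Set (Finset (Fin m)) → Set (Finset (Fin m)) → Prop
  | contract (i : Fin m) (V : Set (Finset (Fin m))) :
      PCStep V ((fun B => B.erase i) '' V)
  | restrictPos (i : Fin m) (V : Set (Finset (Fin m))) :
      PCStep V {B ∈ V | i ∈ B}
  | restrictNeg (i : Fin m) (V : Set (Finset (Fin m))) :
      PCStep V {B ∈ V | i ∉ B}

/-- Partial-cube minor relation: a sequence of contractions and restrictions. -/
def PCMinor {m : ℕ} : Set (Finset (Fin m)) → Set (Finset (Fin m)) → Prop :=
  Relation.ReflTransGen PCStep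

/-- `W` is (the vertex set of) a `k`-dimensional subcube of `Q_m`. -/
def IsCubeFam {m : ℕ} (k : ℕ) (W : Set (Finset (Fin m))) : Prop :=
  ∃ (Y X : Finset (Fin m)), Disjoint Y X ∧ X.card = k ∧
    W = {B | ∃ Z ⊆ X, B = Y ∪ Z}

/-- `G` has the cube `Q_k` as a pc-minor. -/
def HasQMinor {m : ℕ} (V : Set (Finset (Fin m))) (k : ℕ) : Prop :=
  ∃ W, PCMinor V W ∧ IsCubeFam k W

def hdist {m : ℕ} (A B : Finset (Fin m)) : ℕ := (symmDiff A B).card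

def IsConvexIn {m : ℕ} (V S : Set (Finset (Fin m))) : Prop :=
  S ⊆ V ∧ ∀ u ∈ S, ∀ v ∈ S, ∀ x ∈ V, hdist u x + hdist x v = hdist u v → x ∈ S

def convexHullIn {m : ℕ} (V S : Set (Finset (Fin m))) : Set (Finset (Fin m)) :=
  ⋂₀ {T | S ⊆ T ∧ IsConvexIn V T}

def IsGatedIn {m : ℕ} (V S : Set (Finset (Fin m))) : Prop :=
  S ⊆ V ∧ ∀ x ∈ V, ∃ g ∈ S, ∀ y ∈ S, hdist x g + hdist g y = hdist x y

/-- The standardly embedded full subdivision `SK_n` in `Q_n`: singletons and pairs. -/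
def SKset (n : ℕ) : Set (Finset (Fin n)) := {B | B.card = 1 ∨ B.card = 2}

/-- A standardly embedded copy of `SK_n` in `Q_m` along the injection `ι`. -/
def skCopy {m : ℕ} (n : ℕ) (ι : Fin n → Fin m) : Set (Finset (Fin m)) :=
  (fun B => B.image ι) '' SKset n

/-! A family `V` of cube vertices is isometric as soon as any two distinct members `u, v` can be
joined by flipping, inside `V`, one coordinate of `u ∆ v`: iterating gives a walk of length
`|u ∆ v|`, and no walk is shorter since a cube edge changes the Hamming distance by one. In `SK_n`
a pair may drop an element outside the target and a singleton may add an element of the target.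
All members have at most two elements, so no 3-set is shattered, whereas a 2-set missing a point
`c` is shattered by its nonempty subsets together with `{c}`. -/

open SimpleGraph
open scoped symmDiff

section Hamming

variable {m : ℕ}

lemma hdist_triangle (A B C : Finset (Fin m)) : hdist A C ≤ hdist A B + hdist B C :=
  (card_le_card (symmDiff_triangle A B C)).trans (card_union_le _ _)

lemma hdist_self_symmDiff_singleton (A : Finset (Fin m)) (b : Fin m) : hdist A (A ∆ {b}) = 1 := by
  simp [hdist, symmDiff_symmDiff_cancel_left]

lemma hdist_symmDiff_singleton_add_one {A B : Finset (Fin m)} {b : Fin m} (hb : b ∈ A ∆ B) :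
    hdist (A ∆ {b}) B + 1 = hdist A B := by
  have hflip : (A ∆ {b}) ∆ B = (A ∆ B) \ {b} := by
    rw [symmDiff_right_comm, symmDiff_of_ge (singleton_subset_iff.mpr hb)]
  rw [hdist, hdist, hflip, card_sdiff_of_subset (singleton_subset_iff.mpr hb), card_singleton]
  have : 0 < #(A ∆ B) := card_pos.mpr ⟨b, hb⟩
  omega

end Hamming

section Isometry

variable {m : ℕ} {V : Set (Finset (Fin m))}

lemma hdist_le_length {u v : V} (p : ((cubeGraph m).induce V).Walk u v) : hdist u.1 v.1 ≤ p.length := by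
  induction p with
  | nil => simp [hdist]
  | @cons a b c hab _ ih =>
    have hab : hdist a.1 b.1 = 1 := hab
    have := hdist_triangle a.1 b.1 c.1
    rw [Walk.length_cons]
    omega

lemma exists_walk_length_eq_hdist
    (hflip : ∀ u ∈ V, ∀ v ∈ V, u ≠ v → ∃ b ∈ u ∆ v, u ∆ {b} ∈ V) (u v : V) :
    ∃ p : ((cubeGraph m).induce V).Walk u v, p.length = hdist u.1 v.1 := by
  induction hk : hdist u.1 v.1 using Nat.strong_induction_on generalizing u with
  | _ k ih =>
    by_cases huv : u = v
    · subst huv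
      exact ⟨Walk.nil, by simp [← hk, hdist]⟩
    obtain ⟨b, hb, hw⟩ := hflip u u.2 v v.2 (Subtype.coe_ne_coe.mpr huv)
    have hstep := hdist_symmDiff_singleton_add_one hb
    obtain ⟨p, hp⟩ := ih (hdist (u.1 ∆ {b}) v.1) (by omega) ⟨_, hw⟩ rfl
    have hadj : ((cubeGraph m).induce V).Adj u ⟨_, hw⟩ := hdist_self_symmDiff_singleton u.1 b
    exact ⟨Walk.cons hadj p, by rw [Walk.length_cons, hp]; omega⟩

theorem isPC_of_exists_flip_mem
    (hflip : ∀ u ∈ V, ∀ v ∈ V, u ≠ v → ∃ b ∈ u ∆ v, u ∆ {b} ∈ V) : IsPC V := by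
  intro u v
  show _ = hdist u.1 v.1
  obtain ⟨p, hp⟩ := exists_walk_length_eq_hdist hflip u v
  obtain ⟨q, hq⟩ := p.reachable.exists_walk_length_eq_dist
  exact le_antisymm (hp ▸ dist_le p) (hq ▸ hdist_le_length q)

end Isometry

lemma vcdimLE_of_card_le {m d : ℕ} {V : Set (Finset (Fin m))} (hV : ∀ B ∈ V, #B ≤ d) :
    VCdimLE V d := by
  intro Y hY
  obtain ⟨B, hB, hBY⟩ := hY Y Subset.rfl
  exact (card_le_card (inter_eq_right.mp hBY)).trans (hV B hB)

section FullSubdivision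

variable {n : ℕ}

lemma mem_SKset_iff {B : Finset (Fin n)} : B ∈ SKset n ↔ 0 < #B ∧ #B ≤ 2 :=
  show _ ∨ _ ↔ _ by omega

lemma exists_flip_mem_SKset {u v : Finset (Fin n)} (hu : u ∈ SKset n) (hv : v ∈ SKset n)
    (huv : u ≠ v) : ∃ b ∈ u ∆ v, u ∆ {b} ∈ SKset n := by
  obtain ⟨hv_pos, hv_le⟩ := mem_SKset_iff.mp hv
  rcases hu with hu | hu
  · obtain ⟨b, hb⟩ : (v \ u).Nonempty := sdiff_nonempty.mpr fun hvu =>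
      huv (eq_of_subset_of_card_le hvu (by omega)).symm
    have hbu : b ∉ u := (mem_sdiff.mp hb).2
    refine ⟨b, mem_symmDiff.mpr (Or.inr (mem_sdiff.mp hb)), Or.inr ?_⟩
    rw [(disjoint_singleton_right.mpr hbu).symmDiff_eq_sup, sup_eq_union,
      card_union_of_disjoint (disjoint_singleton_right.mpr hbu), hu, card_singleton]
  · obtain ⟨a, ha⟩ : (u \ v).Nonempty := sdiff_nonempty.mpr fun huv_sub =>
      huv (eq_of_subset_of_card_le huv_sub (by omega))
    have hau : {a} ⊆ u := singleton_subset_iff.mpr (mem_sdiff.mp ha).1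
    refine ⟨a, mem_symmDiff.mpr (Or.inl (mem_sdiff.mp ha)), Or.inl ?_⟩
    rw [symmDiff_of_ge hau, card_sdiff_of_subset hau, hu, card_singleton]

lemma shatters_SKset {Y : Finset (Fin n)} {c : Fin n} (hY : #Y ≤ 2) (hc : c ∉ Y) :
    Shatters (SKset n) Y := by
  intro Z hZ
  rcases Z.eq_empty_or_nonempty with rfl | hZne
  · exact ⟨{c}, Or.inl (card_singleton c), singleton_inter_of_notMem hc⟩
  · exact ⟨Z, mem_SKset_iff.mpr ⟨hZne.card_pos, (card_le_card hZ).trans hY⟩, inter_eq_left.mpr hZ⟩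

end FullSubdivision

/-- For `n ≥ 3`, the standardly embedded `SK_n` is an isometric subgraph of
`Q_n` of VC-dimension exactly 2. -/
theorem stmt6 (n : ℕ) (hn : 3 ≤ n) :
    IsPC (SKset n) ∧ VCdimLE (SKset n) 2 ∧
      ∃ Y : Finset (Fin n), Y.card = 2 ∧ Shatters (SKset n) Y := by
  refine ⟨isPC_of_exists_flip_mem fun _ hu _ hv => exists_flip_mem_SKset hu hv,
    vcdimLE_of_card_le fun _ hB => (mem_SKset_iff.mp hB).2, ?_⟩
  let c : Fin n := ⟨0, by omega⟩
  obtain ⟨Y, hYc, hY⟩ := exists_subset_card_eq (s := univ.erase c) (n := 2) (by rw [card_erase_of_mem (mem_univ c), card_univ, Fintype.card_fin]; omega)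
  exact ⟨Y, hY, shatters_SKset hY.le fun hcY => (mem_erase.mp (hYc hcY)).1 rfl⟩
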